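/- arXiv:2605.16554 — 3 statements merged into one kernel-verified Lean document; each statement's English description precedes it below -/
import Mathlib

section
/- Fix a face index j shared by two cells a, b. Suppose for every velocity vector v and density vector ρ with ρ > 0, the per-face energy-residual condition [ (e_a(v) − e_b(v)) − ((h_a(ρ)+Φ_a) − (h_b(ρ)+Φ_b)) (r_j(ρ) − 1) ] · (M₁)_{jj} c = 0 holds for all c ∈ ℝ, where v = c·e_j is supported on face j alone, e_i(v) = (1/2)|P(c e_j)|_i² are the cell kinetic-energy densities (quadratic in c with, by assumption, |P e_j|_a² ≠ |P e_j|_b² for some admissible configuration), h_i(ρ), Φ_i depend only on ρ and on fixed data, r_j is a function of ρ alone, and (M₁)_{jj} > 0. Then no choice of the density-only interpolation r_j(ρ) can satisfy the condition for all c: if (h_a+Φ_a) ≠ (h_b+Φ_b) the required r_j would depend on c through e_a − e_b (contradiction with r_j being a function of ρ alone), and if (h_a+Φ_a) = (h_b+Φ_b) the bracket reduces to e_a(v) − e_b(v) = (c²/2)(|Pe_j|_a² − |Pe_j|_b²) ≠ 0 for c ≠ 0. -/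
/-!
Once the factor `(M₁)_{jj} c` is cancelled for `c ≠ 0`, the condition says that the quadratic
`c² (ke_a − ke_b) / 2` equals a quantity that depends on `ρ` alone; a nonconstant even quadratic
cannot be constant on `c ≠ 0` (compare `c = 1` with `c = 2`), so `ke_a = ke_b`.
-/

theorem eq_zero_of_forall_sq_mul_eq_const {K : Type*} [Field K] [CharZero K] {k d : K}
    (h : ∀ c : K, c ≠ 0 → c ^ 2 * k = d) : k = 0 := by
  have h₁ := h 1 one_ne_zero
  have h₂ := h 2 two_ne_zero
  have h₃ : (3 : K) * k = 0 := by linear_combination h₂ - h₁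
  simpa using h₃

/-- **Face-isolation core of the no-go theorem (C-grid).**
On a face `j` shared by cells `a, b`, the per-face energy-residual condition
`[(e_a − e_b) − ((h_a+Φ_a) − (h_b+Φ_b))(r_j − 1)] · (M₁)_{jj} c = 0`,
required for all single-face velocities `v = c e_j` and all admissible
densities, cannot be satisfied by any density-only interpolation `r_j(ρ)`
when the kinetic-energy reconstruction distinguishes the two adjacent cells
(`|P e_j|_a² ≠ |P e_j|_b²`). -/
theorem no_go_face_isolation
    {α : Type*} (ρ₀ : α)
    (ha hb : α → ℝ) (Φa Φb : ℝ)
    (r : α → ℝ)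
    (Mjj : ℝ) (hMjj : 0 < Mjj)
    (kea keb : ℝ) (hke : kea ≠ keb)
    (hresid : ∀ (ρ : α) (c : ℝ),
      ((c ^ 2 / 2 * kea - c ^ 2 / 2 * keb)
        - ((ha ρ + Φa) - (hb ρ + Φb)) * (r ρ - 1)) * (Mjj * c) = 0) :
    False := by
  have hquad : ∀ c : ℝ, c ≠ 0 →
      c ^ 2 * ((kea - keb) / 2) = ((ha ρ₀ + Φa) - (hb ρ₀ + Φb)) * (r ρ₀ - 1) := by
    intro c hc
    have hbracket := (mul_eq_zero.1 (hresid ρ₀ c)).resolve_right (mul_ne_zero hMjj.ne' hc)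
    linear_combination hbracket
  have hdiff : (kea - keb) / 2 = 0 := eq_zero_of_forall_sq_mul_eq_const hquad
  exact hke (by linarith)
end

section
/- Let η : [0,T] → [0,∞) be continuous with η(0) = 0, and suppose that on the set where η(t) ≤ 2R h^r (for fixed constants R, r, h > 0), η satisfies the differential inequality dη/dt ≤ (C_L/2) η + (C_τ/2) h^r with h-independent constants C_L, C_τ, and suppose R := (C_τ/C_L)(e^{C_L T/2} − 1). Then the continuation set T* := sup{ t ∈ [0,T] : η(s) ≤ 2R h^r for all s ≤ t } equals T, and η(t) ≤ (3/2) R h^r < 2R h^r on all of [0,T]. -/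
open Set Filter Topology Metric

/-- Gronwall bound on any subinterval `[0,b]` where the bootstrap bound holds. -/
theorem bootstrap_gronwall_aux
    (T h r CL Cτ R : ℝ) (hCL : 0 < CL)
    (η : ℝ → ℝ)
    (hcont : ContinuousOn η (Icc 0 T))
    (hzero : η 0 = 0)
    (hdiff : ∀ t ∈ Ico (0:ℝ) T, η t ≤ 2 * R * h ^ r →
      ∃ d : ℝ, HasDerivWithinAt η d (Ici t) t ∧
        d ≤ CL / 2 * η t + Cτ / 2 * h ^ r)
    (b : ℝ) (hb : b ∈ Icc (0:ℝ) T)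
    (hB : ∀ s ∈ Icc (0:ℝ) b, η s ≤ 2 * R * h ^ r) :
    ∀ s ∈ Icc (0:ℝ) b, η s ≤ Cτ / CL * h ^ r * (Real.exp (CL * s / 2) - 1) := by
  have hd : ∀ x, x ∈ Ico (0:ℝ) b →
      ∃ d : ℝ, HasDerivWithinAt η d (Ici x) x ∧ d ≤ CL / 2 * η x + Cτ / 2 * h ^ r := by
    intro x hx
    exact hdiff x ⟨hx.1, lt_of_lt_of_le hx.2 hb.2⟩ (hB x ⟨hx.1, hx.2.le⟩)
  classical
  set f' : ℝ → ℝ := fun x => if hx : x ∈ Ico (0:ℝ) b then (hd x hx).choose else 0 with hf'def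
  have hder : ∀ x ∈ Ico (0:ℝ) b, HasDerivWithinAt η (f' x) (Ici x) x := by
    intro x hx
    simp only [hf'def, dif_pos hx]
    exact (hd x hx).choose_spec.1
  have hbound : ∀ x ∈ Ico (0:ℝ) b, f' x ≤ CL / 2 * η x + Cτ / 2 * h ^ r := by
    intro x hx
    simp only [hf'def, dif_pos hx]
    exact (hd x hx).choose_spec.2
  have hmain := le_gronwallBound_of_liminf_deriv_right_le
    (f := η) (f' := f') (δ := 0) (K := CL / 2) (ε := Cτ / 2 * h ^ r) (a := 0) (b := b)
    (hcont.mono (Icc_subset_Icc le_rfl hb.2))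
    (by
      intro x hx ρ hρ
      have htend := (hder x hx)
      rw [hasDerivWithinAt_iff_tendsto_slope] at htend
      have hIci : (Ici x \ {x} : Set ℝ) = Ioi x := by
        ext z; simp [lt_iff_le_and_ne, and_comm, eq_comm]
      rw [hIci] at htend
      have hev : ∀ᶠ z in 𝓝[>] x, slope η x z < ρ :=
        htend.eventually (Filter.Tendsto.eventually_lt_const hρ tendsto_id)
      refine (hev.mono ?_).frequently
      intro z hz
      rwa [slope_def_field, div_eq_inv_mul] at hz)
    (by rw [hzero])
    hbound
  intro s hs
  have := hmain s hs
  rw [sub_zero] at this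
  have hKne : CL / 2 ≠ 0 := by positivity
  rw [gronwallBound_of_K_ne_0 hKne] at this
  simp only [zero_mul, zero_add] at this
  have heq : Cτ / 2 * h ^ r / (CL / 2) * (Real.exp (CL / 2 * s) - 1)
      = Cτ / CL * h ^ r * (Real.exp (CL * s / 2) - 1) := by
    have h2 : CL / 2 * s = CL * s / 2 := by ring
    rw [h2]
    have hCLne : CL ≠ 0 := ne_of_gt hCL
    field_simp
  rw [heq] at this
  exact this

/-- **Bootstrap-continuation closure of the convergence proof.**
Continuous `η ≥ 0` with `η(0) = 0` satisfying, wherever the bootstrap bound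
`η ≤ 2R h^r` holds, the differential inequality
`dη/dt ≤ (C_L/2) η + (C_τ/2) h^r`, with `R = (C_τ/C_L)(e^{C_L T/2} − 1)`.
Then the continuation time equals `T` and `η ≤ (3/2) R h^r < 2R h^r`
on all of `[0,T]`. -/
theorem bootstrap_continuation
    (T h r CL Cτ R : ℝ)
    (hT : 0 < T) (hh : 0 < h) (hCL : 0 < CL) (hCτ : 0 < Cτ)
    (hR : R = (Cτ / CL) * (Real.exp (CL * T / 2) - 1))
    (η : ℝ → ℝ)
    (hcont : ContinuousOn η (Icc 0 T))
    (hnonneg : ∀ t ∈ Icc (0:ℝ) T, 0 ≤ η t)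
    (hzero : η 0 = 0)
    (hdiff : ∀ t ∈ Ico (0:ℝ) T, η t ≤ 2 * R * h ^ r →
      ∃ d : ℝ, HasDerivWithinAt η d (Ici t) t ∧
        d ≤ CL / 2 * η t + Cτ / 2 * h ^ r) :
    sSup {t ∈ Icc (0:ℝ) T | ∀ s ∈ Icc (0:ℝ) t, η s ≤ 2 * R * h ^ r} = T ∧
    (∀ t ∈ Icc (0:ℝ) T, η t ≤ 3 / 2 * R * h ^ r) ∧
    3 / 2 * R * h ^ r < 2 * R * h ^ r := by
  have hp : (0:ℝ) < h ^ r := Real.rpow_pos_of_pos hh r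
  have hexpT : (1:ℝ) < Real.exp (CL * T / 2) := by
    rw [← Real.exp_zero]
    exact Real.exp_lt_exp.2 (by positivity)
  have hRpos : 0 < R := by
    rw [hR]; have : 0 < Real.exp (CL * T / 2) - 1 := by linarith
    positivity
  have hBpos : 0 < 2 * R * h ^ r := by positivity
  -- the bound function comparison: for s ≤ T the exponential bound ≤ R h^r
  have hgb_le : ∀ s ≤ T, Cτ / CL * h ^ r * (Real.exp (CL * s / 2) - 1) ≤ R * h ^ r := by
    intro s hs
    rw [hR]
    have : Real.exp (CL * s / 2) ≤ Real.exp (CL * T / 2) :=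
      Real.exp_le_exp.2 (by nlinarith)
    have hpos : (0:ℝ) ≤ Cτ / CL * h ^ r := by positivity
    nlinarith
  set A := {t ∈ Icc (0:ℝ) T | ∀ s ∈ Icc (0:ℝ) t, η s ≤ 2 * R * h ^ r} with hA
  have h0A : (0:ℝ) ∈ A := by
    refine ⟨⟨le_rfl, hT.le⟩, ?_⟩
    intro s hs
    have : s = 0 := le_antisymm hs.2 hs.1
    rw [this, hzero]; exact hBpos.le
  have hAbdd : BddAbove A := ⟨T, fun x hx => hx.1.2⟩
  have hAne : A.Nonempty := ⟨0, h0A⟩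
  set c := sSup A with hc
  have hc0 : 0 ≤ c := le_csSup hAbdd h0A
  have hcT : c ≤ T := csSup_le hAne fun x hx => hx.1.2
  have hcI : c ∈ Icc (0:ℝ) T := ⟨hc0, hcT⟩
  -- η ≤ 2Rh^r on [0,c]
  have hltc : ∀ s ∈ Ico (0:ℝ) c, η s ≤ 2 * R * h ^ r := by
    intro s hs
    obtain ⟨t, htA, hst⟩ := exists_lt_of_lt_csSup hAne hs.2
    exact htA.2 s ⟨hs.1, hst.le⟩
  have hcB : η c ≤ 2 * R * h ^ r := by
    rcases eq_or_lt_of_le hc0 with h0 | h0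
    · rw [← h0, hzero]; exact hBpos.le
    · have hcw : ContinuousWithinAt η (Icc 0 T) c := hcont c hcI
      have hcw' : ContinuousWithinAt η (Ico 0 c) c :=
        hcw.mono (fun x hx => ⟨hx.1, le_trans hx.2.le hcT⟩)
      have hne : (𝓝[Ico (0:ℝ) c] c).NeBot := by
        rw [nhdsWithin_Ico_eq_nhdsLT h0]
        exact nhdsLT_neBot c
      exact le_of_tendsto hcw' (eventually_nhdsWithin_of_forall hltc)
  have hBc : ∀ s ∈ Icc (0:ℝ) c, η s ≤ 2 * R * h ^ r := by
    intro s hs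
    rcases eq_or_lt_of_le hs.2 with heq | hlt'
    · rw [heq]; exact hcB
    · exact hltc s ⟨hs.1, hlt'⟩
  have hGc := bootstrap_gronwall_aux T h r CL Cτ R hCL η hcont hzero hdiff c hcI hBc
  -- c = T
  have hcT' : c = T := by
    by_contra hne
    have hclt : c < T := lt_of_le_of_ne hcT hne
    -- strict bound at c
    have hηc : η c < 2 * R * h ^ r := by
      have h1 := hGc c ⟨hc0, le_rfl⟩
      have h2 : Cτ / CL * h ^ r * (Real.exp (CL * c / 2) - 1) ≤ R * h ^ r :=
        hgb_le c hcT
      nlinarith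
    -- continuity: η < 2Rh^r on a right neighborhood of c
    have hcw : ContinuousWithinAt η (Icc 0 T) c := hcont c hcI
    have hev : η ⁻¹' Iio (2 * R * h ^ r) ∈ 𝓝[Icc (0:ℝ) T] c :=
      hcw (Iio_mem_nhds hηc)
    rw [mem_nhdsWithin_iff] at hev
    obtain ⟨ε, hε, hball⟩ := hev
    set c' := min (c + ε / 2) T with hc'
    have hcc' : c < c' := lt_min (by linarith) hclt
    have hc'A : c' ∈ A := by
      refine ⟨⟨le_trans hc0 hcc'.le, min_le_right _ _⟩, ?_⟩
      intro s hs
      rcases le_or_gt s c with hsc | hsc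
      · exact hBc s ⟨hs.1, hsc⟩
      · have hsT : s ≤ T := le_trans hs.2 (min_le_right _ _)
        have hdist : s ∈ ball c ε := by
          rw [mem_ball, Real.dist_eq, abs_of_pos (by linarith)]
          have : s ≤ c + ε / 2 := le_trans hs.2 (min_le_left _ _)
          linarith
        exact (hball ⟨hdist, le_trans hc0 hsc.le, hsT⟩).le
    exact absurd (le_csSup hAbdd hc'A) (not_le.2 hcc')
  refine ⟨hcT', ?_, by nlinarith⟩
  intro t ht
  have h1 : η t ≤ Cτ / CL * h ^ r * (Real.exp (CL * t / 2) - 1) := by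
    apply hGc t
    rw [hcT']; exact ht
  have h2 := hgb_le t ht.2
  nlinarith
end

section
/- Let X = (v̄, ρ̄) with v̄ = 0, and consider the function Ẽ(v, ρ) := (1/2) vᵀ M(ρ) v + Σ_i |K_i| H(ρ_i/|K_i|) + Σ_i ρ_i Φ_i − λ Σ_i ρ_i, where M(ρ) = Pᵀ diag(ρ) P is linear in ρ with P injective, H is C² with H'' > 0, ρ̄ > 0 componentwise, and λ is chosen so that H'(ρ̄_i/|K_i|) + Φ_i = λ for every i (hydrostatic balance). Then ∇Ẽ(X̄) = 0, and the Hessian of Ẽ at X̄ is block-diagonal: the velocity block is M(ρ̄) (positive definite), the density block is diag(|K_i|⁻¹ H''(ρ̄_i/|K_i|)) composed appropriately (positive definite since H'' > 0), and the velocity–density cross block vanishes because v̄ = 0 and M is linear in ρ. Hence ∇²Ẽ(X̄) is positive definite. -/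
open Matrix Finset Asymptotics

lemma quadform_eq {n F : ℕ} (P : Matrix (Fin n) (Fin F) ℝ) (d : Fin n → ℝ) (w : Fin F → ℝ) :
    w ⬝ᵥ (Pᵀ * Matrix.diagonal d * P).mulVec w = ∑ i, d i * (P.mulVec w i)^2 := by
  rw [← Matrix.mulVec_mulVec, ← Matrix.mulVec_mulVec, Matrix.dotProduct_mulVec,
    Matrix.vecMul_transpose]
  simp only [dotProduct, Matrix.mulVec_diagonal]
  exact Finset.sum_congr rfl fun i _ => by ring

lemma taylor2 {H H' : ℝ → ℝ} {x a : ℝ}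
    (hH' : ∀ y ∈ Set.Ioi (0:ℝ), HasDerivAt H (H' y) y) (hx : 0 < x)
    (hH'' : HasDerivAt H' a x) :
    (fun t : ℝ => H (x + t) - H x - t * H' x - t^2/2 * a) =o[nhds (0:ℝ)] fun t => t^2 := by
  rw [isLittleO_iff]
  intro ε hε
  have htend : Filter.Tendsto (fun s : ℝ => x + s) (nhds 0) (nhds x) := by
    simpa using (continuous_add_left x).tendsto 0
  have h1 : (fun s : ℝ => H' (x + s) - H' x - s * a) =o[nhds 0] fun s => s := by
    have h0 := (hasDerivAt_iff_isLittleO.mp hH'').comp_tendsto htend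
    simpa [Function.comp_def, smul_eq_mul, mul_comm, add_sub_cancel_left] using h0
  rw [isLittleO_iff] at h1
  have h1' := h1 hε
  rw [Metric.eventually_nhds_iff] at h1' ⊢
  obtain ⟨δ, hδ, hb⟩ := h1'
  refine ⟨min δ x, lt_min hδ hx, fun t ht => ?_⟩
  simp only [Real.dist_eq, sub_zero] at ht hb
  set φ : ℝ → ℝ := fun s => H (x + s) - H x - s * H' x - s^2/2 * a with hφ
  have habs : ∀ s ∈ Set.uIcc (0:ℝ) t, |s| ≤ |t| := by
    intro s hs
    rw [Set.uIcc_eq_union, Set.mem_union] at hs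
    rcases hs with hs | hs <;> rw [Set.mem_Icc] at hs <;>
      rw [abs_le] <;> constructor <;> nlinarith [abs_nonneg t, le_abs_self t, neg_abs_le t]
  have key : ∀ s ∈ Set.uIcc (0:ℝ) t,
      HasDerivWithinAt φ (H' (x + s) - H' x - s * a) (Set.uIcc (0:ℝ) t) s := by
    intro s hs
    have hsx : 0 < x + s := by
      have h2 : |s| ≤ |t| := habs s hs
      have h3 := lt_of_lt_of_le ht (min_le_right δ x)
      nlinarith [neg_abs_le s, le_abs_self s]
    have hcomp : HasDerivAt (fun s : ℝ => H (x + s)) (H' (x + s)) s := by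
      have h := (hH' _ hsx).comp s ((hasDerivAt_id s).const_add x)
      rw [mul_one] at h
      exact h
    have h2 : HasDerivAt (fun y : ℝ => y^2/2*a) (s*a) s := by
      have := ((hasDerivAt_pow 2 s).div_const 2).mul_const a
      exact this.congr_deriv (by norm_num)
    have h3 : HasDerivAt (fun y : ℝ => y * H' x) (H' x) s := by
      simpa using (hasDerivAt_id s).mul_const (H' x)
    exact (((hcomp.sub_const (H x)).sub h3).sub h2).hasDerivWithinAt
  have bound : ∀ s ∈ Set.uIcc (0:ℝ) t, ‖H' (x + s) - H' x - s * a‖ ≤ ε * |t| := by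
    intro s hs
    have hst : |s| ≤ |t| := habs s hs
    have hsδ : |s| < δ := lt_of_le_of_lt hst (lt_of_lt_of_le ht (min_le_left δ x))
    have := hb hsδ
    simp only [Real.norm_eq_abs] at this ⊢
    nlinarith
  have hm := Convex.norm_image_sub_le_of_norm_hasDerivWithin_le key bound
    (convex_uIcc 0 t) Set.left_mem_uIcc Set.right_mem_uIcc
  simp only [Real.norm_eq_abs, sub_zero] at hm
  simp only [Real.norm_eq_abs]
  have h4 : |t^2| = |t| * |t| := by rw [pow_two, abs_mul]
  calc |H (x + t) - H x - t * H' x - t^2/2*a|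
      = |φ t - φ 0| := by simp [hφ]
    _ ≤ ε * |t| * |t| := hm
    _ = ε * |t^2| := by rw [h4]; ring

/-- **Hydrostatic Lyapunov Hessian of the density-weighted scheme.**
At the hydrostatic equilibrium `X̄ = (v̄, ρ̄)` with `v̄ = 0` and
`H'(ρ̄_i/|K_i|) + Φ_i = λ` for every `i`, the modified energy
`Ẽ(v,ρ) = ½ vᵀ M(ρ) v + Σ K_i H(ρ_i/K_i) + Σ ρ_i Φ_i − λ Σ ρ_i`, with
`M(ρ) = Pᵀ diag(ρ) P` linear in `ρ` and `P` injective, has a critical point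
at `X̄` and a block-diagonal positive definite Hessian: the quadratic form
`Q(w,σ) = wᵀ M(ρ̄) w + Σ_i H''(ρ̄_i/K_i)/K_i · σ_i²` is positive definite
and is the exact second-order Taylor coefficient of `Ẽ` at `X̄` (so in
particular the gradient vanishes and the velocity–density cross block is
zero). -/
theorem hydrostatic_hessian_positive_definite
    (n F : ℕ)
    (P : Matrix (Fin n) (Fin F) ℝ)
    (hker : ∀ w : Fin F → ℝ, P.mulVec w = 0 → w = 0)
    (K Φ ρbar : Fin n → ℝ)
    (hK : ∀ i, 0 < K i) (hρbar : ∀ i, 0 < ρbar i)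
    (H H' H'' : ℝ → ℝ)
    (hH' : ∀ x ∈ Set.Ioi (0:ℝ), HasDerivAt H (H' x) x)
    (hH'' : ∀ x ∈ Set.Ioi (0:ℝ), HasDerivAt H' (H'' x) x)
    (hconv : ∀ x ∈ Set.Ioi (0:ℝ), 0 < H'' x)
    (lam : ℝ)
    (hhydro : ∀ i, H' (ρbar i / K i) + Φ i = lam)
    (E : (Fin F → ℝ) → (Fin n → ℝ) → ℝ)
    (hE : ∀ v ρ, E v ρ =
      (1/2) * (v ⬝ᵥ (Pᵀ * Matrix.diagonal ρ * P).mulVec v)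
      + ∑ i, K i * H (ρ i / K i) + ∑ i, ρ i * Φ i - lam * ∑ i, ρ i)
    (Q : (Fin F → ℝ) → (Fin n → ℝ) → ℝ)
    (hQ : ∀ w σ, Q w σ =
      w ⬝ᵥ (Pᵀ * Matrix.diagonal ρbar * P).mulVec w
      + ∑ i, H'' (ρbar i / K i) / K i * (σ i) ^ 2) :
    (∀ (w : Fin F → ℝ) (σ : Fin n → ℝ), (w ≠ 0 ∨ σ ≠ 0) → 0 < Q w σ) ∧
    (∀ (w : Fin F → ℝ) (σ : Fin n → ℝ),
      (fun t : ℝ => E (t • w) (ρbar + t • σ) - E 0 ρbar - t ^ 2 / 2 * Q w σ)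
        =o[nhds (0:ℝ)] fun t => t ^ 2) := by
  constructor
  · -- positivity of Q
    intro w σ hws
    rw [hQ, quadform_eq]
    have hx : ∀ i : Fin n, 0 < ρbar i / K i := fun i => div_pos (hρbar i) (hK i)
    have h1nn : ∀ i ∈ Finset.univ, (0:ℝ) ≤ ρbar i * (P.mulVec w i)^2 :=
      fun i _ => mul_nonneg (hρbar i).le (sq_nonneg _)
    have h2nn : ∀ i ∈ Finset.univ, (0:ℝ) ≤ H'' (ρbar i / K i) / K i * (σ i)^2 :=
      fun i _ => mul_nonneg (div_nonneg (hconv _ (hx i)).le (hK i).le) (sq_nonneg _)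
    rcases hws with hw | hσ
    · have hPw : P.mulVec w ≠ 0 := fun h => hw (hker w h)
      obtain ⟨j, hj⟩ := Function.ne_iff.mp hPw
      have hpos : (0:ℝ) < ∑ i, ρbar i * (P.mulVec w i)^2 :=
        Finset.sum_pos' h1nn ⟨j, Finset.mem_univ j,
          mul_pos (hρbar j) (lt_of_le_of_ne (sq_nonneg _) (Ne.symm (pow_ne_zero 2 hj)))⟩
      exact add_pos_of_pos_of_nonneg hpos (Finset.sum_nonneg h2nn)
    · obtain ⟨j, hj⟩ := Function.ne_iff.mp hσ
      have hpos : (0:ℝ) < ∑ i, H'' (ρbar i / K i) / K i * (σ i)^2 :=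
        Finset.sum_pos' h2nn ⟨j, Finset.mem_univ j,
          mul_pos (div_pos (hconv _ (hx j)) (hK j))
            (lt_of_le_of_ne (sq_nonneg _) (Ne.symm (pow_ne_zero 2 hj)))⟩
      exact add_pos_of_nonneg_of_pos (Finset.sum_nonneg h1nn) hpos
  · -- second-order Taylor expansion
    intro w σ
    have hx : ∀ i : Fin n, 0 < ρbar i / K i := fun i => div_pos (hρbar i) (hK i)
    have hEq : ∀ t : ℝ, E (t • w) (ρbar + t • σ) - E 0 ρbar - t ^ 2 / 2 * Q w σ
        = ∑ i, (t^3/2 * (σ i * (P.mulVec w i)^2)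
            + K i * (H (ρbar i / K i + t * (σ i / K i)) - H (ρbar i / K i)
                - (t * (σ i / K i)) * H' (ρbar i / K i)
                - (t * (σ i / K i))^2/2 * H'' (ρbar i / K i))) := by
      intro t
      rw [hE, hE, hQ, quadform_eq, quadform_eq, quadform_eq]
      simp only [Matrix.mulVec_smul, Matrix.mulVec_zero, Pi.smul_apply, Pi.add_apply,
        Pi.zero_apply, smul_eq_mul, Finset.mul_sum, ← Finset.sum_sub_distrib,
        ← Finset.sum_add_distrib]
      refine Finset.sum_congr rfl fun i _ => ?_
      have hdiv : (ρbar i + t * σ i) / K i = ρbar i / K i + t * (σ i / K i) := by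
        rw [add_div, mul_div_assoc]
      rw [hdiv]
      have hΦ : Φ i = lam - H' (ρbar i / K i) := by linarith [hhydro i]
      rw [hΦ]
      have hK0 : K i ≠ 0 := (hK i).ne'
      field_simp
      ring
    have main : (fun t : ℝ => ∑ i, (t^3/2 * (σ i * (P.mulVec w i)^2)
            + K i * (H (ρbar i / K i + t * (σ i / K i)) - H (ρbar i / K i)
                - (t * (σ i / K i)) * H' (ρbar i / K i)
                - (t * (σ i / K i))^2/2 * H'' (ρbar i / K i))))
        =o[nhds (0:ℝ)] fun t => t^2 := by
      refine IsLittleO.fun_sum fun i _ => IsLittleO.add ?_ ?_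
      · have h3 : (fun t : ℝ => t^3) =o[nhds (0:ℝ)] fun t => t^2 :=
          isLittleO_pow_pow (by norm_num)
        exact (h3.const_mul_left (σ i * (P.mulVec w i)^2 / 2)).congr
          (fun t => by ring) (fun t => rfl)
      · have hT := taylor2 hH' (hx i) (hH'' _ (hx i))
        have htend : Filter.Tendsto (fun t : ℝ => t * (σ i / K i)) (nhds 0) (nhds 0) := by
          simpa using (continuous_mul_right (σ i / K i)).tendsto 0
        have hc := hT.comp_tendsto htend
        have hO : (fun t : ℝ => (t * (σ i / K i))^2) =O[nhds (0:ℝ)] fun t => t^2 :=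
          ((isBigO_refl (fun t : ℝ => t^2) (nhds 0)).const_mul_left ((σ i / K i)^2)).congr
            (fun t => by ring) (fun t => rfl)
        have := (hc.trans_isBigO hO).const_mul_left (K i)
        exact this.congr (fun t => by simp [Function.comp]) (fun t => rfl)
    simp only [hEq]
    exact main
end
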